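/- arXiv:2202.08766 — 4 statements merged into one kernel-verified Lean document; each statement's English description precedes it below -/
import Mathlib

section
/- Let O and I be finite index types. Given complex block matrices A_OO, Ã_OO : Matrix O O ℂ, A_OI : Matrix O I ℂ, A_IO : Matrix I O ℂ, A_II : Matrix I I ℂ with A_II invertible, define A = fromBlocks A_OO A_OI A_IO A_II and Ã = fromBlocks Ã_OO A_OI A_IO A_II. Then for every λ ∈ ℂ with λ ≠ 1 and every vector u = (u_O, u_I) on O ⊕ I, the generalized eigenequation Ã *ᵥ u = λ • (A *ᵥ u) holds if and only if u_I = −A_II⁻¹ *ᵥ (A_IO *ᵥ u_O) and (Ã_OO − A_OI * A_II⁻¹ * A_IO) *ᵥ u_O = (λ/(1−λ)) • ((A_OO − Ã_OO) *ᵥ u_O). In other words, the GenEO-type eigenproblem without partition of unity is equivalent to a DtN-type Schur complement eigenproblem on the O degrees of freedom with transformed eigenvalue μ = λ/(1−λ) and with the I-components given by the discrete harmonic (Helmholtz) extension of u_O. -/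
open Matrix

private lemma aux_smul_iff {α : Type*} (c : ℂ) (hc : c ≠ 1)
    (E F : α → ℂ) : E = c • (E + F) ↔ E = (c / (1 - c)) • F := by
  have hc' : (1 - c) ≠ 0 := sub_ne_zero.mpr (Ne.symm hc)
  constructor
  · intro h
    have h1 : (1 - c) • E = c • F := by
      rw [sub_smul, one_smul]
      nth_rewrite 1 [h]
      rw [smul_add]
      abel
    calc E = (1/(1-c)) • ((1-c) • E) := by
            rw [smul_smul, one_div_mul_cancel hc', one_smul]
      _ = (1/(1-c)) • (c • F) := by rw [h1]
      _ = (c/(1-c)) • F := by rw [smul_smul]; ring_nf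
  · intro h
    rw [smul_add, h, smul_smul, ← add_smul]
    congr 1
    field_simp
    ring

/-- The GenEO-type generalized eigenproblem without partition of unity is equivalent to a
DtN-type Schur complement eigenproblem on the O degrees of freedom with transformed
eigenvalue `μ = λ/(1-λ)` and discrete harmonic extension of the I-components. -/
theorem geneo_iff_dtn_schur
    {O I : Type*} [Fintype O] [Fintype I] [DecidableEq O] [DecidableEq I]
    (AOO AtOO : Matrix O O ℂ) (AOI : Matrix O I ℂ) (AIO : Matrix I O ℂ) (AII : Matrix I I ℂ)
    (hAII : IsUnit AII.det) (lam : ℂ) (hlam : lam ≠ 1) (uO : O → ℂ) (uI : I → ℂ) :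
    (Matrix.fromBlocks AtOO AOI AIO AII) *ᵥ (Sum.elim uO uI) =
        lam • ((Matrix.fromBlocks AOO AOI AIO AII) *ᵥ (Sum.elim uO uI)) ↔
      uI = -(AII⁻¹ *ᵥ (AIO *ᵥ uO)) ∧
        (AtOO - AOI * AII⁻¹ * AIO) *ᵥ uO = (lam / (1 - lam)) • ((AOO - AtOO) *ᵥ uO) := by
  have hc' : (1 - lam) ≠ 0 := sub_ne_zero.mpr (Ne.symm hlam)
  have hinv : AII⁻¹ * AII = 1 := nonsing_inv_mul AII hAII
  have hinv' : AII * AII⁻¹ = 1 := mul_nonsing_inv AII hAII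
  have key : (Matrix.fromBlocks AtOO AOI AIO AII) *ᵥ (Sum.elim uO uI) =
        lam • ((Matrix.fromBlocks AOO AOI AIO AII) *ᵥ (Sum.elim uO uI)) ↔
      (AtOO *ᵥ uO + AOI *ᵥ uI = lam • (AOO *ᵥ uO + AOI *ᵥ uI)) ∧
      (AIO *ᵥ uO + AII *ᵥ uI = lam • (AIO *ᵥ uO + AII *ᵥ uI)) := by
    rw [fromBlocks_mulVec, fromBlocks_mulVec]
    constructor
    · intro h
      exact ⟨funext fun o => congrFun h (Sum.inl o), funext fun i => congrFun h (Sum.inr i)⟩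
    · rintro ⟨h1, h2⟩
      funext x
      cases x with
      | inl o => simpa using congrFun h1 o
      | inr i => simpa using congrFun h2 i
  rw [key]
  have row2 : (AIO *ᵥ uO + AII *ᵥ uI = lam • (AIO *ᵥ uO + AII *ᵥ uI)) ↔
      uI = -(AII⁻¹ *ᵥ (AIO *ᵥ uO)) := by
    constructor
    · intro h
      have hz : AIO *ᵥ uO + AII *ᵥ uI = 0 := by
        have h1 : (1 - lam) • (AIO *ᵥ uO + AII *ᵥ uI) = 0 := by
          rw [sub_smul, one_smul, ← h, sub_self]
        exact (smul_eq_zero.mp h1).resolve_left hc'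
      have hII : AII *ᵥ uI = -(AIO *ᵥ uO) := by
        rw [eq_neg_iff_add_eq_zero, add_comm]; exact hz
      calc uI = (AII⁻¹ * AII) *ᵥ uI := by rw [hinv, one_mulVec]
        _ = AII⁻¹ *ᵥ (AII *ᵥ uI) := by rw [mulVec_mulVec]
        _ = -(AII⁻¹ *ᵥ (AIO *ᵥ uO)) := by rw [hII, mulVec_neg]
    · intro h
      have hII : AII *ᵥ uI = -(AIO *ᵥ uO) := by
        rw [h, mulVec_neg, mulVec_mulVec, mulVec_mulVec, hinv',
          Matrix.one_mul]
      rw [hII, add_neg_cancel, smul_zero]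
  have row1_iff : uI = -(AII⁻¹ *ᵥ (AIO *ᵥ uO)) →
      ((AtOO *ᵥ uO + AOI *ᵥ uI = lam • (AOO *ᵥ uO + AOI *ᵥ uI)) ↔
        (AtOO - AOI * AII⁻¹ * AIO) *ᵥ uO = (lam / (1 - lam)) • ((AOO - AtOO) *ᵥ uO)) := by
    intro h
    subst h
    have hS : AOI *ᵥ (-(AII⁻¹ *ᵥ (AIO *ᵥ uO))) = -((AOI * AII⁻¹ * AIO) *ᵥ uO) := by
      rw [mulVec_neg, mulVec_mulVec, mulVec_mulVec]
    rw [hS, sub_mulVec, sub_mulVec,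
      ← aux_smul_iff lam hlam (AtOO *ᵥ uO - (AOI * AII⁻¹ * AIO) *ᵥ uO)
        (AOO *ᵥ uO - AtOO *ᵥ uO)]
    have harr : (AtOO *ᵥ uO - (AOI * AII⁻¹ * AIO) *ᵥ uO) + (AOO *ᵥ uO - AtOO *ᵥ uO)
        = AOO *ᵥ uO + -((AOI * AII⁻¹ * AIO) *ᵥ uO) := by abel
    rw [harr, sub_eq_add_neg]
  constructor
  · rintro ⟨h1, h2⟩
    have h2' := row2.mp h2
    exact ⟨h2', (row1_iff h2').mp h1⟩
  · rintro ⟨h2, hs⟩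
    exact ⟨(row1_iff h2).mpr hs, row2.mpr h2⟩
end

section
/- Let O and I be finite index types. Given complex block matrices A_OO, Ã_OO : Matrix O O ℂ, A_OI : Matrix O I ℂ, A_IO : Matrix I O ℂ, A_II : Matrix I I ℂ with A_II invertible, define A = fromBlocks A_OO A_OI A_IO A_II and Ã = fromBlocks Ã_OO A_OI A_IO A_II. Let μ ∈ ℂ with μ ≠ −1 and suppose u_O : O → ℂ satisfies the Schur complement eigenproblem (Ã_OO − A_OI * A_II⁻¹ * A_IO) *ᵥ u_O = μ • ((A_OO − Ã_OO) *ᵥ u_O). Then the vector u = (u_O, u_I) with u_I = −A_II⁻¹ *ᵥ (A_IO *ᵥ u_O) satisfies Ã *ᵥ u = (μ/(1+μ)) • (A *ᵥ u); that is, every eigenpair of the DtN-type Schur complement eigenproblem extends harmonically to an eigenpair of the GenEO-type generalized eigenproblem with eigenvalue λ = μ/(1+μ). -/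
open Matrix

/-- Every eigenpair of the DtN-type Schur complement eigenproblem extends harmonically to
an eigenpair of the GenEO-type generalized eigenproblem with eigenvalue `λ = μ/(1+μ)`. -/
theorem dtn_schur_extends_to_geneo
    {O I : Type*} [Fintype O] [Fintype I] [DecidableEq O] [DecidableEq I]
    (AOO AtOO : Matrix O O ℂ) (AOI : Matrix O I ℂ) (AIO : Matrix I O ℂ) (AII : Matrix I I ℂ)
    (hAII : IsUnit AII.det) (μ : ℂ) (hμ : μ ≠ -1) (uO : O → ℂ)
    (h : (AtOO - AOI * AII⁻¹ * AIO) *ᵥ uO = μ • ((AOO - AtOO) *ᵥ uO)) :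
    (Matrix.fromBlocks AtOO AOI AIO AII) *ᵥ
        (Sum.elim uO (-(AII⁻¹ *ᵥ (AIO *ᵥ uO)))) =
      (μ / (1 + μ)) • ((Matrix.fromBlocks AOO AOI AIO AII) *ᵥ
        (Sum.elim uO (-(AII⁻¹ *ᵥ (AIO *ᵥ uO))))) := by
  have h1 : (1 : ℂ) + μ ≠ 0 := by
    intro h0
    exact hμ (by linear_combination h0)
  have key2 : AII *ᵥ (-(AII⁻¹ *ᵥ (AIO *ᵥ uO))) = -(AIO *ᵥ uO) := by
    rw [mulVec_neg, mulVec_mulVec, Matrix.mul_nonsing_inv _ hAII, one_mulVec]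
  have topN : AtOO *ᵥ uO + AOI *ᵥ (-(AII⁻¹ *ᵥ (AIO *ᵥ uO)))
      = μ • ((AOO - AtOO) *ᵥ uO) := by
    rw [← h, sub_mulVec, mulVec_neg, mulVec_mulVec, mulVec_mulVec, sub_eq_add_neg]
  have topD : AOO *ᵥ uO + AOI *ᵥ (-(AII⁻¹ *ᵥ (AIO *ᵥ uO)))
      = (1 + μ) • ((AOO - AtOO) *ᵥ uO) := by
    have : AOO *ᵥ uO + AOI *ᵥ (-(AII⁻¹ *ᵥ (AIO *ᵥ uO)))
        = (AOO - AtOO) *ᵥ uO + (AtOO *ᵥ uO + AOI *ᵥ (-(AII⁻¹ *ᵥ (AIO *ᵥ uO)))) := by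
      rw [sub_mulVec]; abel
    rw [this, topN]
    module
  rw [fromBlocks_mulVec, fromBlocks_mulVec]
  simp only [Sum.elim_comp_inl, Sum.elim_comp_inr, key2, topN, topD, add_neg_cancel]
  ext (i | i)
  · simp only [Sum.elim_inl, Pi.smul_apply, smul_eq_mul]
    field_simp
  · simp
end

section
/- Let O and I be finite index types and k ∈ ℂ. Given complex Laplace stiffness blocks L_OO, L̃_OO : Matrix O O ℂ, L_OI : Matrix O I ℂ, L_IO : Matrix I O ℂ, L_II : Matrix I I ℂ and mass blocks M_OO : Matrix O O ℂ, M_OI : Matrix O I ℂ, M_IO : Matrix I O ℂ, M_II : Matrix I I ℂ, define L = fromBlocks L_OO L_OI L_IO L_II, L̃ = fromBlocks L̃_OO L_OI L_IO L_II, M = fromBlocks M_OO M_OI M_IO M_II, and the Neumann Helmholtz matrix Ã = L̃ − k² • M. For λ ∈ ℂ with λ ≠ 1, set κ² = k²/(1−λ) and define B = L − κ² • M and B̃ = L̃ − κ² • M. Then (1−λ)⁻¹ • (Ã − λ • L) equals the block matrix with top-left block B̃_OO + (λ/(1−λ)) • (L̃_OO − L_OO), top-right block B_OI = L_OI − κ²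 • M_OI, bottom-left block B_IO = L_IO − κ² • M_IO, and bottom-right block B_II = L_II − κ² • M_II; consequently, for any vector u on O ⊕ I, the H-GenEO-type eigenequation Ã *ᵥ u = λ • (L *ᵥ u) holds if and only if this block matrix applied to u is zero. -/
open Matrix

/-- The H-GenEO-type eigenequation `Ã u = λ L u` (with `Ã = L̃ - k² M`) is, for `λ ≠ 1`,
equivalent to the vanishing of a block matrix built from the shifted Helmholtz matrices
`B = L - κ² M`, `B̃ = L̃ - κ² M` with `κ² = k²/(1-λ)`. -/
theorem hgeneo_block_form
    {O I : Type*} [Fintype O] [Fintype I] [DecidableEq O] [DecidableEq I]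
    (k : ℂ)
    (LOO LtOO : Matrix O O ℂ) (LOI : Matrix O I ℂ) (LIO : Matrix I O ℂ) (LII : Matrix I I ℂ)
    (MOO : Matrix O O ℂ) (MOI : Matrix O I ℂ) (MIO : Matrix I O ℂ) (MII : Matrix I I ℂ)
    (lam : ℂ) (hlam : lam ≠ 1) :
    ((1 - lam)⁻¹ •
        ((Matrix.fromBlocks LtOO LOI LIO LII - k ^ 2 • Matrix.fromBlocks MOO MOI MIO MII) -
          lam • Matrix.fromBlocks LOO LOI LIO LII) =
      Matrix.fromBlocks
        ((LtOO - (k ^ 2 / (1 - lam)) • MOO) + (lam / (1 - lam)) • (LtOO - LOO))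
        (LOI - (k ^ 2 / (1 - lam)) • MOI)
        (LIO - (k ^ 2 / (1 - lam)) • MIO)
        (LII - (k ^ 2 / (1 - lam)) • MII)) ∧
    (∀ (uO : O → ℂ) (uI : I → ℂ),
      (Matrix.fromBlocks LtOO LOI LIO LII - k ^ 2 • Matrix.fromBlocks MOO MOI MIO MII) *ᵥ
          (Sum.elim uO uI) =
        lam • ((Matrix.fromBlocks LOO LOI LIO LII) *ᵥ (Sum.elim uO uI)) ↔
      (Matrix.fromBlocks
          ((LtOO - (k ^ 2 / (1 - lam)) • MOO) + (lam / (1 - lam)) • (LtOO - LOO))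
          (LOI - (k ^ 2 / (1 - lam)) • MOI)
          (LIO - (k ^ 2 / (1 - lam)) • MIO)
          (LII - (k ^ 2 / (1 - lam)) • MII)) *ᵥ (Sum.elim uO uI) = 0) := by

  have hne : (1 - lam) ≠ 0 := sub_ne_zero.mpr (Ne.symm hlam)
  have h1 : ((1 - lam)⁻¹ •
        ((Matrix.fromBlocks LtOO LOI LIO LII - k ^ 2 • Matrix.fromBlocks MOO MOI MIO MII) -
          lam • Matrix.fromBlocks LOO LOI LIO LII) =
      Matrix.fromBlocks
        ((LtOO - (k ^ 2 / (1 - lam)) • MOO) + (lam / (1 - lam)) • (LtOO - LOO))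
        (LOI - (k ^ 2 / (1 - lam)) • MOI)
        (LIO - (k ^ 2 / (1 - lam)) • MIO)
        (LII - (k ^ 2 / (1 - lam)) • MII)) := by
    ext i j
    rcases i with i | i <;> rcases j with j | j <;>
      simp only [Matrix.smul_apply, Matrix.sub_apply, Matrix.add_apply,
        Matrix.fromBlocks_apply₁₁, Matrix.fromBlocks_apply₁₂,
        Matrix.fromBlocks_apply₂₁, Matrix.fromBlocks_apply₂₂, smul_eq_mul] <;>
      field_simp <;> ring
  refine ⟨h1, fun uO uI => ?_⟩
  rw [← h1]
  rw [Matrix.smul_mulVec, smul_eq_zero]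
  simp only [inv_eq_zero, hne, false_or]
  rw [Matrix.sub_mulVec, Matrix.sub_mulVec, Matrix.smul_mulVec, Matrix.smul_mulVec, sub_eq_zero, Matrix.sub_mulVec, Matrix.smul_mulVec]
end

section
/- Let O and I be finite index types and k ∈ ℂ. Given complex Laplace stiffness blocks L_OO, L̃_OO : Matrix O O ℂ, L_OI : Matrix O I ℂ, L_IO : Matrix I O ℂ, L_II : Matrix I I ℂ and mass blocks M_OO, M_OI, M_IO, M_II, define L = fromBlocks L_OO L_OI L_IO L_II, L̃ = fromBlocks L̃_OO L_OI L_IO L_II, M = fromBlocks M_OO M_OI M_IO M_II and Ã = L̃ − k² • M. Let λ ∈ ℂ with λ ≠ 1, set κ² = k²/(1−λ), B = L − κ² • M, B̃ = L̃ − κ² • M, and write B_OO, B_OI, B_IO, B_II and B̃_OO for the corresponding blocks. Assume B_II = L_II − κ² • M_II is invertible. Then for every vector u = (u_O, u_I) on O ⊕ I, the H-GenEO-type eigenequation Ã *ᵥ u = λ • (L *ᵥ u) holds if and only if u_I = −B_II⁻¹ *ᵥ (B_IO *ᵥ u_O) and (B̃_OO − B_OI * B_II⁻¹ * B_IO) *ᵥ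 u_O = (λ/(1−λ)) • ((B_OO − B̃_OO) *ᵥ u_O). In other words, the H-GenEO eigenproblem corresponds to a DtN-type Schur complement eigenproblem for the Helmholtz matrices with the eigenvalue-dependent wave number κ. -/
open Matrix

private lemma hgeneo_scalI (k lam a b c d : ℂ) (hc : (1:ℂ) - lam ≠ 0) :
    a + b - k ^ 2 * (c + d) = lam * (a + b) ↔
    a - k ^ 2 / (1 - lam) * c + (b - k ^ 2 / (1 - lam) * d) = 0 := by
  rw [div_mul_eq_mul_div, div_mul_eq_mul_div, sub_div' hc, sub_div' hc,
    ← add_div, div_eq_iff hc, zero_mul]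
  constructor <;> intro h <;> linear_combination h

private lemma hgeneo_scalO (k lam t a b m n : ℂ) (hc : (1:ℂ) - lam ≠ 0) :
    t + b - k ^ 2 * (m + n) = lam * (a + b) ↔
    t - k ^ 2 / (1 - lam) * m + (b - k ^ 2 / (1 - lam) * n) =
      lam / (1 - lam) * (a - k ^ 2 / (1 - lam) * m - (t - k ^ 2 / (1 - lam) * m)) := by
  rw [sub_sub_sub_cancel_right, div_mul_eq_mul_div, div_mul_eq_mul_div, div_mul_eq_mul_div,
    sub_div' hc, sub_div' hc, ← add_div, div_eq_div_iff hc hc]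
  constructor
  · intro h
    linear_combination (1 - lam) * h
  · intro h
    have h' := mul_right_cancel₀ hc h
    linear_combination h'

/-- The H-GenEO eigenproblem `Ã u = λ L u` corresponds to a DtN-type Schur complement
eigenproblem for the Helmholtz matrices with eigenvalue-dependent wave number
`κ² = k²/(1-λ)`, together with the discrete harmonic (Helmholtz) extension of `u_O`. -/
theorem hgeneo_iff_dtn_schur
    {O I : Type*} [Fintype O] [Fintype I] [DecidableEq O] [DecidableEq I]
    (k : ℂ)
    (LOO LtOO : Matrix O O ℂ) (LOI : Matrix O I ℂ) (LIO : Matrix I O ℂ) (LII : Matrix I I ℂ)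
    (MOO : Matrix O O ℂ) (MOI : Matrix O I ℂ) (MIO : Matrix I O ℂ) (MII : Matrix I I ℂ)
    (lam : ℂ) (hlam : lam ≠ 1)
    (hBII : IsUnit (LII - (k ^ 2 / (1 - lam)) • MII).det)
    (uO : O → ℂ) (uI : I → ℂ) :
    (Matrix.fromBlocks LtOO LOI LIO LII - k ^ 2 • Matrix.fromBlocks MOO MOI MIO MII) *ᵥ
        (Sum.elim uO uI) =
      lam • ((Matrix.fromBlocks LOO LOI LIO LII) *ᵥ (Sum.elim uO uI)) ↔
    (uI = -((LII - (k ^ 2 / (1 - lam)) • MII)⁻¹ *ᵥ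
            ((LIO - (k ^ 2 / (1 - lam)) • MIO) *ᵥ uO)) ∧
      ((LtOO - (k ^ 2 / (1 - lam)) • MOO) -
          (LOI - (k ^ 2 / (1 - lam)) • MOI) * (LII - (k ^ 2 / (1 - lam)) • MII)⁻¹ *
            (LIO - (k ^ 2 / (1 - lam)) • MIO)) *ᵥ uO =
        (lam / (1 - lam)) •
          (((LOO - (k ^ 2 / (1 - lam)) • MOO) - (LtOO - (k ^ 2 / (1 - lam)) • MOO)) *ᵥ uO)) := by
  have hc : (1 : ℂ) - lam ≠ 0 := sub_ne_zero_of_ne (Ne.symm hlam)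
  have hrows :
      ((Matrix.fromBlocks LtOO LOI LIO LII - k ^ 2 • Matrix.fromBlocks MOO MOI MIO MII) *ᵥ
          (Sum.elim uO uI) =
        lam • ((Matrix.fromBlocks LOO LOI LIO LII) *ᵥ (Sum.elim uO uI))) ↔
      (((LtOO - (k ^ 2 / (1 - lam)) • MOO) *ᵥ uO + (LOI - (k ^ 2 / (1 - lam)) • MOI) *ᵥ uI =
          (lam / (1 - lam)) •
            (((LOO - (k ^ 2 / (1 - lam)) • MOO) - (LtOO - (k ^ 2 / (1 - lam)) • MOO)) *ᵥ uO)) ∧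
        ((LIO - (k ^ 2 / (1 - lam)) • MIO) *ᵥ uO +
            (LII - (k ^ 2 / (1 - lam)) • MII) *ᵥ uI = 0)) := by
    simp only [Matrix.sub_mulVec, Matrix.smul_mulVec, Matrix.fromBlocks_mulVec,
      Sum.elim_comp_inl, Sum.elim_comp_inr, funext_iff, Sum.forall, Sum.elim_inl,
      Sum.elim_inr, Pi.sub_apply, Pi.add_apply, Pi.smul_apply, smul_eq_mul, Pi.zero_apply]
    exact and_congr (forall_congr' fun o => hgeneo_scalO k lam _ _ _ _ _ hc)
      (forall_congr' fun i => hgeneo_scalI k lam _ _ _ _ hc)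
  rw [hrows]
  have hBinv' : (LII - (k ^ 2 / (1 - lam)) • MII)⁻¹ * (LII - (k ^ 2 / (1 - lam)) • MII) = 1 :=
    Matrix.nonsing_inv_mul _ hBII
  have hI : ((LIO - (k ^ 2 / (1 - lam)) • MIO) *ᵥ uO +
        (LII - (k ^ 2 / (1 - lam)) • MII) *ᵥ uI = 0) ↔
      uI = -((LII - (k ^ 2 / (1 - lam)) • MII)⁻¹ *ᵥ
        ((LIO - (k ^ 2 / (1 - lam)) • MIO) *ᵥ uO)) := by
    constructor
    · intro h
      have h' : (LII - (k ^ 2 / (1 - lam)) • MII) *ᵥ uI =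
          -((LIO - (k ^ 2 / (1 - lam)) • MIO) *ᵥ uO) := by
        rw [add_comm] at h
        exact eq_neg_of_add_eq_zero_left h
      have h2 : (LII - (k ^ 2 / (1 - lam)) • MII)⁻¹ *ᵥ
          ((LII - (k ^ 2 / (1 - lam)) • MII) *ᵥ uI) = uI := by
        rw [Matrix.mulVec_mulVec, hBinv', Matrix.one_mulVec]
      rw [← h2, h', Matrix.mulVec_neg]
    · intro h
      rw [h, Matrix.mulVec_neg, Matrix.mulVec_mulVec, Matrix.mulVec_mulVec,
        Matrix.mul_nonsing_inv _ hBII, Matrix.one_mul]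
      exact add_neg_cancel _
  have hsub : uI = -((LII - (k ^ 2 / (1 - lam)) • MII)⁻¹ *ᵥ
        ((LIO - (k ^ 2 / (1 - lam)) • MIO) *ᵥ uO)) →
      (LOI - (k ^ 2 / (1 - lam)) • MOI) *ᵥ uI =
        -(((LOI - (k ^ 2 / (1 - lam)) • MOI) * (LII - (k ^ 2 / (1 - lam)) • MII)⁻¹ *
            (LIO - (k ^ 2 / (1 - lam)) • MIO)) *ᵥ uO) := by
    intro h
    rw [h, Matrix.mulVec_neg, Matrix.mulVec_mulVec, Matrix.mulVec_mulVec]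
  constructor
  · rintro ⟨h1, h2⟩
    have huI := hI.mp h2
    refine ⟨huI, ?_⟩
    rw [Matrix.sub_mulVec, sub_eq_add_neg, ← hsub huI]
    exact h1
  · rintro ⟨huI, hschur⟩
    refine ⟨?_, hI.mpr huI⟩
    rw [Matrix.sub_mulVec, sub_eq_add_neg, ← hsub huI] at hschur
    exact hschur
end
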